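/- Let F₁ and F₂ be saturated FDFAs with leading automata Q₁, Q₂ and progress DFAs P¹_q, P²_q. Define H as the FDFA with leading automaton Q₁ × Q₂ and, for each state (q₁,q₂), the progress DFA P¹_{q₁} ⊗ P²_{q₂} (product DFA accepting the intersection of the two DFA languages). Then L(H) = L(F₁) ∩ L(F₂), and H is saturated. -/

import Mathlib

open Classical

/-- `wpow v n` is the word `v` repeated `n` times. -/
def wpow {α : Type} (v : List α) : ℕ → List α
  | 0 => []
  | n + 1 => wpow v n ++ v

/-- The ultimately periodic infinite word `u·v^ω` (meaningful when `v ≠ []`). -/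
def upWord {α : Type} [Inhabited α] (u v : List α) : ℕ → α := fun n =>
  if n < u.length then u.getD n default
  else v.getD ((n - u.length) % v.length) default

/-- `l` is a prefix of the infinite word `w`. -/
def prefOf {α : Type} [Inhabited α] (l : List α) (w : ℕ → α) : Prop :=
  ∀ i < l.length, w i = l.getD i default

/-- A complete deterministic automaton (no acceptance condition). -/
structure DetAuto (α : Type) : Type 1 where
  State : Type
  [fin : Fintype State]
  init : State
  step : State → α → State

attribute [instance] DetAuto.fin

namespace DetAuto

variable {α : Type}

/-- The state reached from `q` after reading the finite word `w`. -/
def run (A : DetAuto α) (q : A.State) (w : List α) : A.State := w.foldl A.step q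

/-- The state reached from the initial state after reading `w`. -/
def eval (A : DetAuto α) (w : List α) : A.State := A.run A.init w

/-- The (infinite) run of `A` on an infinite word `w`. -/
def runSeq (A : DetAuto α) (w : ℕ → α) : ℕ → A.State
  | 0 => A.init
  | n + 1 => A.step (A.runSeq w n) (w n)

lemma exists_rep (A : DetAuto α) (u v : List α) :
    ∃ i, ∃ j, 1 ≤ j ∧ A.eval (u ++ wpow v i) = A.eval (u ++ wpow v (i + j)) := by
  obtain ⟨a, b, hab, hfab⟩ :=
    Finite.exists_ne_map_eq_of_infinite (fun n : ℕ => A.eval (u ++ wpow v n))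
  rcases Nat.lt_or_gt_of_ne hab with h | h
  · exact ⟨a, b - a, by omega, by rw [Nat.add_sub_cancel' h.le]; exact hfab⟩
  · exact ⟨b, a - b, by omega, by rw [Nat.add_sub_cancel' h.le]; exact hfab.symm⟩

/-- The least `i` in the normalization of `(u,v)` w.r.t. `A`. -/
noncomputable def normI (A : DetAuto α) (u v : List α) : ℕ :=
  Nat.find (A.exists_rep u v)

lemma normI_spec (A : DetAuto α) (u v : List α) :
    ∃ j, 1 ≤ j ∧ A.eval (u ++ wpow v (A.normI u v))
      = A.eval (u ++ wpow v (A.normI u v + j)) :=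
  Nat.find_spec (A.exists_rep u v)

/-- The least `j` in the normalization of `(u,v)` w.r.t. `A`. -/
noncomputable def normJ (A : DetAuto α) (u v : List α) : ℕ :=
  Nat.find (A.normI_spec u v)

/-- The normalization `(x, y) = (u·v^i, v^j)` of `(u,v)` w.r.t. `A`. -/
noncomputable def normalize (A : DetAuto α) (u v : List α) : List α × List α :=
  (u ++ wpow v (A.normI u v), wpow v (A.normJ u v))

/-- The product automaton. -/
def prod (A B : DetAuto α) : DetAuto α where
  State := A.State × B.State
  init := (A.init, B.init)
  step := fun p σ => (A.step p.1 σ, B.step p.2 σ)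

end DetAuto

/-- A family of DFAs: a leading automaton and a progress DFA for each of its states. -/
structure FDFA (α : Type) : Type 1 where
  leading : DetAuto α
  pState : leading.State → Type
  [pFin : ∀ q, Fintype (pState q)]
  pInit : ∀ q, pState q
  pStep : ∀ q, pState q → α → pState q
  pAcc : ∀ q, Set (pState q)

attribute [instance] FDFA.pFin

namespace FDFA

variable {α : Type}

/-- The progress DFA at state `q` accepts the finite word `y`. -/
def progAccept (F : FDFA α) (q : F.leading.State) (y : List α) : Prop :=
  y.foldl (F.pStep q) (F.pInit q) ∈ F.pAcc q

/-- `F` accepts the pair `(u, v)`: with `(x,y)` the normalization of `(u,v)` w.r.t.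
the leading automaton, the progress DFA at the state reached on `x` accepts `y`. -/
noncomputable def Accept (F : FDFA α) (u v : List α) : Prop :=
  F.progAccept (F.leading.eval (F.leading.normalize u v).1) (F.leading.normalize u v).2

/-- `F` is saturated: acceptance of `(u,v)` depends only on the infinite word `u·v^ω`. -/
def Saturated [Inhabited α] (F : FDFA α) : Prop :=
  ∀ u v u' v' : List α, v ≠ [] → v' ≠ [] → upWord u v = upWord u' v' →
    (F.Accept u v ↔ F.Accept u' v')

/-- The complement FDFA: same structure, complemented accepting states. -/
def compl (F : FDFA α) : FDFA α :=
  { F with pAcc := fun q => (F.pAcc q)ᶜ }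

end FDFA

/-- The intersection-product FDFA: product leading automaton, product progress DFAs with
accepting states `F₁ × F₂`. -/
def FDFA.inter {α : Type} (F G : FDFA α) : FDFA α where
  leading := F.leading.prod G.leading
  pState := fun q => F.pState q.1 × G.pState q.2
  pInit := fun q => (F.pInit q.1, G.pInit q.2)
  pStep := fun q p σ => (F.pStep q.1 p.1 σ, G.pStep q.2 p.2 σ)
  pAcc := fun q => {p | p.1 ∈ F.pAcc q.1 ∧ p.2 ∈ G.pAcc q.2}

/-!
Normalizing `(u, v)` with respect to a leading automaton `Q` gives a pair `(x, y)` with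
`x·y^ω = u·v^ω` on which `Q` loops, `Q(x·y) = Q(x)`, and such a pair is its own normalization.
The normalization with respect to `Q₁ × Q₂` is therefore self-normalizing for `Q₁` and for `Q₂`
alike, so `H` accepts `(u, v)` iff `P¹_{Q₁(x)}` and `P²_{Q₂(x)}` both accept `y`, i.e. iff
`F₁` and `F₂` accept `(x, y)`. Saturation of `F₁` and `F₂` lets us replace `(x, y)` by `(u, v)`,
and it also makes the resulting conjunction depend on `u·v^ω` only.
-/

section Words

variable {α : Type}

lemma wpow_add (v : List α) (a b : ℕ) : wpow v (a + b) = wpow v a ++ wpow v b := by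
  induction b with
  | zero => simp [wpow]
  | succ b ih => simp [wpow, ih]

lemma wpow_length (v : List α) (n : ℕ) : (wpow v n).length = n * v.length := by
  induction n with
  | zero => simp [wpow]
  | succ n ih => simp [wpow, ih, Nat.succ_mul]

lemma wpow_ne_nil {v : List α} (hv : v ≠ []) {n : ℕ} (hn : n ≠ 0) : wpow v n ≠ [] := by
  rw [← List.length_pos_iff, wpow_length]
  exact Nat.mul_pos (Nat.pos_of_ne_zero hn) (List.length_pos_iff.mpr hv)

lemma getD_wpow (v : List α) {n m : ℕ} (d : α) (hm : m < n * v.length) :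
    (wpow v n).getD m d = v.getD (m % v.length) d := by
  induction n with
  | zero => simp at hm
  | succ n ih =>
    rw [wpow]
    rcases lt_or_ge m (n * v.length) with h | h
    · rw [List.getD_append _ _ _ _ (by rwa [wpow_length]), ih h]
    · rw [List.getD_append_right _ _ _ _ (by rwa [wpow_length]), wpow_length]
      have hlt : m - n * v.length < v.length := by rw [Nat.succ_mul] at hm; omega
      rw [← Nat.mod_eq_of_lt hlt, Nat.mul_comm, Nat.sub_mul_mod (by rwa [Nat.mul_comm])]

variable [Inhabited α]

lemma upWord_append_self (u : List α) {v : List α} (hv : v ≠ []) :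
    upWord (u ++ v) v = upWord u v := by
  have hv' : 0 < v.length := List.length_pos_iff.mpr hv
  funext n
  simp only [upWord, List.length_append]
  by_cases h₁ : n < u.length
  · rw [if_pos (by omega), if_pos h₁, List.getD_append _ _ _ _ h₁]
  by_cases h₂ : n < u.length + v.length
  · rw [if_pos h₂, if_neg h₁, List.getD_append_right _ _ _ _ (by omega),
      Nat.mod_eq_of_lt (by omega)]
  · rw [if_neg h₂, if_neg h₁, show n - u.length = n - (u.length + v.length) + v.length by omega,
      Nat.add_mod_right]

lemma upWord_append_wpow (u : List α) {v : List α} (hv : v ≠ []) (i : ℕ) :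
    upWord (u ++ wpow v i) v = upWord u v := by
  induction i with
  | zero => simp [wpow]
  | succ i ih => rw [wpow, ← List.append_assoc, upWord_append_self _ hv, ih]

lemma upWord_wpow (u : List α) {v : List α} (hv : v ≠ []) {j : ℕ} (hj : j ≠ 0) :
    upWord u (wpow v j) = upWord u v := by
  have hlen : 0 < (wpow v j).length := List.length_pos_iff.mpr (wpow_ne_nil hv hj)
  funext n
  simp only [upWord]
  split_ifs
  · rfl
  · rw [getD_wpow v _ (by rw [← wpow_length]; exact Nat.mod_lt _ hlen), wpow_length,
      Nat.mod_mod_of_dvd _ (Dvd.intro_left j rfl)]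

end Words

namespace DetAuto

variable {α : Type}

lemma run_prod (A B : DetAuto α) (p : A.State) (q : B.State) (w : List α) :
    (A.prod B).run (p, q) w = (A.run p w, B.run q w) := by
  induction w generalizing p q with
  | nil => rfl
  | cons a w ih => exact ih _ _

lemma eval_prod (A B : DetAuto α) (w : List α) : (A.prod B).eval w = (A.eval w, B.eval w) :=
  run_prod A B A.init B.init w

lemma normJ_pos (A : DetAuto α) (u v : List α) : 0 < A.normJ u v :=
  (Nat.find_spec (A.normI_spec u v)).1

lemma eval_normalize_append (A : DetAuto α) (u v : List α) :
    A.eval ((A.normalize u v).1 ++ (A.normalize u v).2) = A.eval (A.normalize u v).1 := by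
  simp only [normalize, List.append_assoc, ← wpow_add]
  exact (Nat.find_spec (A.normI_spec u v)).2.symm

lemma normalize_of_eval_append_eq (A : DetAuto α) {x y : List α}
    (h : A.eval (x ++ y) = A.eval x) : A.normalize x y = (x, y) := by
  have hI : A.normI x y = 0 :=
    (Nat.find_eq_zero _).mpr ⟨1, le_rfl, by simp [wpow, h]⟩
  have hJ : A.normJ x y = 1 :=
    le_antisymm (Nat.find_min' _ ⟨le_rfl, by simp [hI, wpow, h]⟩) (A.normJ_pos x y)
  simp [normalize, hI, hJ, wpow]

lemma normalize_snd_ne_nil (A : DetAuto α) (u : List α) {v : List α} (hv : v ≠ []) :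
    (A.normalize u v).2 ≠ [] :=
  wpow_ne_nil hv (A.normJ_pos u v).ne'

lemma upWord_normalize [Inhabited α] (A : DetAuto α) (u : List α) {v : List α} (hv : v ≠ []) :
    upWord (A.normalize u v).1 (A.normalize u v).2 = upWord u v := by
  rw [normalize, upWord_wpow _ hv (A.normJ_pos u v).ne', upWord_append_wpow u hv]

end DetAuto

namespace FDFA

variable {α : Type}

lemma accept_of_eval_append_eq (F : FDFA α) {x y : List α}
    (h : F.leading.eval (x ++ y) = F.leading.eval x) :
    F.Accept x y ↔ F.progAccept (F.leading.eval x) y := by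
  rw [Accept, F.leading.normalize_of_eval_append_eq h]

lemma Saturated.accept_iff_progAccept [Inhabited α] {F : FDFA α} (hF : F.Saturated)
    {u v x y : List α} (hv : v ≠ []) (hy : y ≠ []) (hxy : upWord x y = upWord u v)
    (h : F.leading.eval (x ++ y) = F.leading.eval x) :
    F.Accept u v ↔ F.progAccept (F.leading.eval x) y := by
  rw [hF u v x y hv hy hxy.symm, F.accept_of_eval_append_eq h]

lemma inter_progAccept (F G : FDFA α) (q : (F.inter G).leading.State) (y : List α) :
    (F.inter G).progAccept q y ↔ F.progAccept q.1 y ∧ G.progAccept q.2 y := by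
  suffices ∀ p : (F.inter G).pState q,
      y.foldl ((F.inter G).pStep q) p = (y.foldl (F.pStep q.1) p.1, y.foldl (G.pStep q.2) p.2) by
    rw [progAccept, this]; rfl
  induction y with
  | nil => intro p; rfl
  | cons a y ih => intro p; exact ih _

lemma inter_eval_fst (F G : FDFA α) (w : List α) :
    ((F.inter G).leading.eval w).1 = F.leading.eval w :=
  congrArg Prod.fst (DetAuto.eval_prod F.leading G.leading w)

lemma inter_eval_snd (F G : FDFA α) (w : List α) :
    ((F.inter G).leading.eval w).2 = G.leading.eval w :=
  congrArg Prod.snd (DetAuto.eval_prod F.leading G.leading w)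

lemma inter_accept_iff [Inhabited α] {F G : FDFA α} (hF : F.Saturated) (hG : G.Saturated)
    (u : List α) {v : List α} (hv : v ≠ []) :
    (F.inter G).Accept u v ↔ F.Accept u v ∧ G.Accept u v := by
  set A := (F.inter G).leading
  rcases hxy : A.normalize u v with ⟨x, y⟩
  have hloop : A.eval (x ++ y) = A.eval x := by
    simpa [hxy] using A.eval_normalize_append u v
  have hy : y ≠ [] := by simpa [hxy] using A.normalize_snd_ne_nil u hv
  have hup : upWord x y = upWord u v := by simpa [hxy] using A.upWord_normalize u hv
  have hloop₁ := congrArg Prod.fst hloop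
  have hloop₂ := congrArg Prod.snd hloop
  rw [inter_eval_fst, inter_eval_fst] at hloop₁
  rw [inter_eval_snd, inter_eval_snd] at hloop₂
  rw [Accept, hxy, inter_progAccept, inter_eval_fst, inter_eval_snd,
    hF.accept_iff_progAccept hv hy hup hloop₁, hG.accept_iff_progAccept hv hy hup hloop₂]

end FDFA

/-- For saturated FDFAs `F₁, F₂`, the product FDFA `H` with accepting
sets `F¹ × F²` recognizes `L(F₁) ∩ L(F₂)`, and `H` is saturated. -/
theorem fdfa_inter_correct {α : Type} [Inhabited α] (F₁ F₂ : FDFA α)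
    (h₁ : F₁.Saturated) (h₂ : F₂.Saturated) :
    (∀ u v : List α, v ≠ [] →
      ((F₁.inter F₂).Accept u v ↔ F₁.Accept u v ∧ F₂.Accept u v)) ∧
    (F₁.inter F₂).Saturated := by
  refine ⟨fun u v hv => FDFA.inter_accept_iff h₁ h₂ u hv, ?_⟩
  intro u v u' v' hv hv' hw
  rw [FDFA.inter_accept_iff h₁ h₂ u hv, FDFA.inter_accept_iff h₁ h₂ u' hv',
    h₁ u v u' v' hv hv' hw, h₂ u v u' v' hv hv' hw]
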